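/- arXiv:2103.15291 — 3 statements merged into one kernel-verified Lean document; each statement's English description precedes it below -/
import Mathlib

section
/- For integers n, r, k with n ≥ r-1 ≥ 0, ∑_{j=r-1}^{n} S_r(n+1, j+1) · c_j^{(k)} = ∑_{ℓ=1}^{r} (-1)^{r-ℓ} s(r,ℓ) · ∑_{i=0}^{n-r+ℓ} C(n-r+ℓ, i) / (i+1)^k. -/
open Finset

/-- Unsigned Stirling numbers of the first kind. -/
def stirling1 : ℕ → ℕ → ℕ
  | 0, 0 => 1
  | 0, _ + 1 => 0
  | _ + 1, 0 => 0
  | n + 1, k + 1 => n * stirling1 n (k + 1) + stirling1 n k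

/-- Stirling numbers of the second kind. -/
def stirling2 : ℕ → ℕ → ℕ
  | 0, 0 => 1
  | 0, _ + 1 => 0
  | _ + 1, 0 => 0
  | n + 1, k + 1 => (k + 1) * stirling2 n (k + 1) + stirling2 n k

/-- Unsigned r-Stirling numbers of the first kind. -/
def rStirling1 (r : ℕ) : ℕ → ℕ → ℕ
  | 0, m => if r = 0 ∧ m = 0 then 1 else 0
  | n + 1, m =>
    if n + 1 < r then 0
    else if n + 1 = r then (if m = r then 1 else 0)
    else n * rStirling1 r n m + (match m with | 0 => 0 | m' + 1 => rStirling1 r n m')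

/-- r-Stirling numbers of the second kind. -/
def rStirling2 (r : ℕ) : ℕ → ℕ → ℕ
  | 0, m => if r = 0 ∧ m = 0 then 1 else 0
  | n + 1, m =>
    if n + 1 < r then 0
    else if n + 1 = r then (if m = r then 1 else 0)
    else m * rStirling2 r n m + (match m with | 0 => 0 | m' + 1 => rStirling2 r n m')

/-- Poly-Cauchy numbers of the first kind `c_n^{(k)}`. -/
noncomputable def polyCauchy (k : ℤ) (n : ℕ) : ℝ :=
  ∑ ℓ ∈ range (n + 1), (-1 : ℝ) ^ (n - ℓ) * stirling1 n ℓ / ((ℓ : ℝ) + 1) ^ k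

/-- Poly-Cauchy numbers of the second kind `ĉ_n^{(k)}`. -/
noncomputable def polyCauchy2 (k : ℤ) (n : ℕ) : ℝ :=
  (-1 : ℝ) ^ n * ∑ ℓ ∈ range (n + 1), (stirling1 n ℓ : ℝ) / ((ℓ : ℝ) + 1) ^ k

/-- Poly-Cauchy polynomials of the first kind `c_n^{(k)}(z)`. -/
noncomputable def polyCauchyPoly (k : ℤ) (n : ℕ) (z : ℝ) : ℝ :=
  ∑ m ∈ range (n + 1), (stirling1 n m : ℝ) * (-1 : ℝ) ^ (n - m) *
    ∑ i ∈ range (m + 1), (m.choose i : ℝ) * z ^ (m - i) / ((i : ℝ) + 1) ^ k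

/-- Shifted poly-Cauchy numbers of the first kind `c_{n,α}^{(k)}`. -/
noncomputable def shiftedPolyCauchy (k : ℤ) (n : ℕ) (α : ℝ) : ℝ :=
  ∑ m ∈ range (n + 1), (stirling1 n m : ℝ) * (-1 : ℝ) ^ (n - m) / ((m : ℝ) + α) ^ k

/-- Shifted poly-Cauchy numbers of the second kind `ĉ_{n,α}^{(k)}`. -/
noncomputable def shiftedPolyCauchy2 (k : ℤ) (n : ℕ) (α : ℝ) : ℝ :=
  (-1 : ℝ) ^ n * ∑ m ∈ range (n + 1), (stirling1 n m : ℝ) / ((m : ℝ) + α) ^ k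

/-!
Both sides are linear in the sequence `a i = 1 / (i + 1) ^ k`, so it suffices to prove the
identity after the umbral substitution `a i ↦ x ^ i` (the linear functional `umbralEval a`
sending `X ^ i` to `a i`). It turns `c_j^{(k)}` into the falling factorial `(x)_j` and the
inner binomial sum into `(x + 1) ^ (n - r + ℓ)`, so the claim becomes the polynomial identity
`∑ j, S_r(n + 1, j + 1) (x)_j = (x + 1) ^ (n + 1 - r) (x)_(r - 1)`. This follows by induction
on `n` from `(x + 1) (x)_j = (x)_(j + 1) + (j + 1) (x)_j`, while `(x + 1) (x)_(r - 1) = (x + 1)_r`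
expands `(x)_(r - 1)` in powers of `x + 1` with the signed coefficients `s(r, ℓ)`.
-/

open Polynomial

lemma rStirling2_eq_zero_of_lt {r N m : ℕ} (h : N < m) : rStirling2 r N m = 0 := by
  induction N generalizing m <;> cases m <;> grind [rStirling2]

lemma rStirling2_eq_zero_of_lt_r {r N m : ℕ} (h : m < r) : rStirling2 r N m = 0 := by
  induction N generalizing m <;> cases m <;> grind [rStirling2]

lemma rStirling2_self (r m : ℕ) : rStirling2 r r m = if m = r then 1 else 0 := by
  cases r <;> simp [rStirling2]

lemma rStirling2_succ_succ {r N : ℕ} (h : r ≤ N) (m : ℕ) :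
    rStirling2 r (N + 1) (m + 1) = (m + 1) * rStirling2 r N (m + 1) + rStirling2 r N m := by
  rw [rStirling2, if_neg (by omega), if_neg (by omega)]

section CommRing

variable {R : Type*} [CommRing R]

lemma coeff_descPochhammer (j ℓ : ℕ) :
    (descPochhammer R j).coeff ℓ = (-1) ^ (j + ℓ) * stirling1 j ℓ := by
  induction j generalizing ℓ with
  | zero => rcases ℓ with _ | ℓ <;> simp [stirling1, coeff_one]
  | succ j ih =>
    rcases ℓ with _ | ℓ
    · simp [coeff_zero_eq_eval_zero, stirling1]
    · rw [descPochhammer_succ_right, ← C_eq_natCast, coeff_mul_X_sub_C, ih, ih, stirling1]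
      push_cast
      ring

lemma natDegree_descPochhammer_le (j : ℕ) : (descPochhammer R j).natDegree ≤ j := by
  rw [← descPochhammer_map (Int.castRingHom R)]
  exact natDegree_map_le.trans (descPochhammer_natDegree ℤ j).le

lemma descPochhammer_eq_sum_stirling1 (j : ℕ) :
    descPochhammer R j =
      ∑ ℓ ∈ range (j + 1), C ((-1 : R) ^ (j + ℓ) * stirling1 j ℓ) * X ^ ℓ := by
  simp_rw [← coeff_descPochhammer]
  exact as_sum_range_C_mul_X_pow' _ (Nat.lt_succ_of_le (natDegree_descPochhammer_le j))

lemma descPochhammer_eq_sum_stirling1_X_add_one (s : ℕ) :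
    descPochhammer R s =
      ∑ i ∈ range (s + 1),
        C ((-1 : R) ^ (s + i) * stirling1 (s + 1) (i + 1)) * (X + 1) ^ i := by
  apply (monic_X_add_C (1 : R)).isRegular.left
  have shift : (descPochhammer R (s + 1)).comp (X + 1) = (X + 1) * descPochhammer R s := by
    rw [descPochhammer_succ_left, Polynomial.mul_comp, X_comp, comp_assoc, sub_comp, X_comp,
      one_comp, add_sub_cancel_right, comp_X]
  simp only [map_one]
  rw [← shift, descPochhammer_eq_sum_stirling1, Polynomial.sum_comp, sum_range_succ', mul_sum,
    show stirling1 (s + 1) 0 = 0 from rfl]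
  simp only [Nat.cast_zero, mul_zero, C_0, zero_mul, zero_comp, add_zero, C_mul_comp, X_pow_comp]
  refine sum_congr rfl fun i _ => ?_
  rw [show (-1 : R) ^ (s + 1 + (i + 1)) = (-1) ^ (s + i) by ring]
  ring

lemma sum_rStirling2_smul_descPochhammer (s : ℕ) {N : ℕ} (hN : s + 1 ≤ N) :
    ∑ j ∈ range N, rStirling2 (s + 1) N (j + 1) • descPochhammer R j =
      (X + 1) ^ (N - (s + 1)) * descPochhammer R s := by
  induction N, hN using Nat.le_induction with
  | base => simp [rStirling2_self, Finset.sum_ite_eq']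
  | succ N hN ih =>
    have falling : ∀ j : ℕ, (j + 1) • descPochhammer R j + descPochhammer R (j + 1) =
        (X + 1) * descPochhammer R j := by
      intro j
      rw [descPochhammer_succ_right, nsmul_eq_mul]
      push_cast
      ring
    calc ∑ j ∈ range (N + 1), rStirling2 (s + 1) (N + 1) (j + 1) • descPochhammer R j
        = ∑ j ∈ range (N + 1), rStirling2 (s + 1) N (j + 1) • ((j + 1) • descPochhammer R j)
          + ∑ j ∈ range (N + 1), rStirling2 (s + 1) N j • descPochhammer R j := by
          rw [← sum_add_distrib]
          refine sum_congr rfl fun j _ => ?_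
          rw [rStirling2_succ_succ hN, add_smul, mul_smul, smul_comm]
      _ = ∑ j ∈ range N, rStirling2 (s + 1) N (j + 1) •
            ((j + 1) • descPochhammer R j + descPochhammer R (j + 1)) := by
          rw [sum_range_succ, rStirling2_eq_zero_of_lt (by omega), sum_range_succ',
            rStirling2_eq_zero_of_lt_r (by omega)]
          simp only [zero_smul, add_zero, smul_add, sum_add_distrib]
      _ = (X + 1) ^ (N + 1 - (s + 1)) * descPochhammer R s := by
          simp_rw [falling, ← mul_smul_comm, ← mul_sum, ih, ← mul_assoc, ← pow_succ',
            Nat.sub_add_comm hN]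

def umbralEval (a : ℕ → R) : R[X] →ₗ[R] R :=
  lsum fun i => a i • LinearMap.id

lemma umbralEval_eq_sum_range (a : ℕ → R) {p : R[X]} {n : ℕ} (hp : p.natDegree < n) :
    umbralEval a p = ∑ i ∈ range n, p.coeff i * a i := by
  rw [umbralEval, lsum_apply, sum_over_range' p (by simp) n hp]
  simp [mul_comm]

lemma umbralEval_descPochhammer (a : ℕ → R) (j : ℕ) :
    umbralEval a (descPochhammer R j) =
      ∑ ℓ ∈ range (j + 1), (-1) ^ (j + ℓ) * stirling1 j ℓ * a ℓ := by
  simp_rw [umbralEval_eq_sum_range a (Nat.lt_succ_of_le (natDegree_descPochhammer_le j)),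
    coeff_descPochhammer]

lemma umbralEval_X_add_one_pow (a : ℕ → R) (m : ℕ) :
    umbralEval a ((X + 1) ^ m) = ∑ i ∈ range (m + 1), m.choose i * a i := by
  have hdeg : ((X + 1 : R[X]) ^ m).natDegree < m + 1 :=
    Nat.lt_succ_of_le (by compute_degree)
  simp_rw [umbralEval_eq_sum_range a hdeg, coeff_X_add_one_pow]

lemma neg_one_pow_sub_eq_pow_add {j ℓ : ℕ} (h : ℓ ≤ j) :
    (-1 : R) ^ (j - ℓ) = (-1) ^ (j + ℓ) := by
  obtain ⟨t, rfl⟩ := exists_add_of_le h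
  rw [Nat.add_sub_cancel_left, add_right_comm, ← two_mul, pow_add, pow_mul]
  simp

lemma sum_Icc_rStirling2_smul_descPochhammer {r n : ℕ} (hr : 1 ≤ r) (hn : r - 1 ≤ n) :
    ∑ j ∈ Icc (r - 1) n, rStirling2 r (n + 1) (j + 1) • descPochhammer R j =
      (X + 1) ^ (n + 1 - r) * descPochhammer R (r - 1) := by
  obtain ⟨s, rfl⟩ : ∃ s, r = s + 1 := ⟨r - 1, by omega⟩
  rw [Nat.add_sub_cancel, ← sum_rStirling2_smul_descPochhammer s (by omega)]
  refine sum_subset (fun j hj => ?_) fun j hj hj' => ?_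
  · simp only [mem_Icc, mem_range] at hj ⊢
    omega
  · simp only [mem_Icc, mem_range, not_and, not_le] at hj hj'
    rw [rStirling2_eq_zero_of_lt_r (by omega), zero_smul]

lemma umbralEval_X_add_one_pow_mul_descPochhammer (a : ℕ → R) {r n : ℕ} (hr : 1 ≤ r)
    (hn : r - 1 ≤ n) :
    umbralEval a ((X + 1) ^ (n + 1 - r) * descPochhammer R (r - 1)) =
      ∑ ℓ ∈ Icc 1 r, (-1) ^ (r - ℓ) * stirling1 r ℓ *
        ∑ i ∈ range (n + ℓ - r + 1), (n + ℓ - r).choose i * a i := by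
  obtain ⟨s, rfl⟩ : ∃ s, r = s + 1 := ⟨r - 1, by omega⟩
  rw [Nat.add_sub_cancel, descPochhammer_eq_sum_stirling1_X_add_one, mul_sum, map_sum,
    ← Ico_add_one_right_eq_Icc, sum_Ico_eq_sum_range, Nat.add_sub_cancel]
  refine sum_congr rfl fun i hi => ?_
  rw [mul_left_comm, ← pow_add, ← smul_eq_C_mul, map_smul, umbralEval_X_add_one_pow,
    smul_eq_mul, add_comm 1 i, Nat.add_sub_add_right s,
    neg_one_pow_sub_eq_pow_add (Nat.le_of_lt_succ (mem_range.1 hi)),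
    show n + (i + 1) - (s + 1) = n + 1 - (s + 1) + i by omega]

end CommRing

lemma polyCauchy_eq_umbralEval (k : ℤ) (j : ℕ) :
    polyCauchy k j = umbralEval (fun i => (((i : ℝ) + 1) ^ k)⁻¹) (descPochhammer ℝ j) := by
  rw [umbralEval_descPochhammer, polyCauchy]
  refine sum_congr rfl fun ℓ hℓ => ?_
  rw [neg_one_pow_sub_eq_pow_add (Nat.le_of_lt_succ (mem_range.1 hℓ)), div_eq_mul_inv]

theorem stmt3 (n r : ℕ) (k : ℤ) (hr : 1 ≤ r) (hn : r - 1 ≤ n) :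
    ∑ j ∈ Finset.Icc (r - 1) n, (rStirling2 r (n + 1) (j + 1) : ℝ) * polyCauchy k j =
      ∑ ℓ ∈ Finset.Icc 1 r, (-1 : ℝ) ^ (r - ℓ) * (stirling1 r ℓ : ℝ) *
        ∑ i ∈ Finset.range (n + ℓ - r + 1),
          ((n + ℓ - r).choose i : ℝ) / ((i : ℝ) + 1) ^ k := by
  set a : ℕ → ℝ := fun i => (((i : ℝ) + 1) ^ k)⁻¹
  calc ∑ j ∈ Icc (r - 1) n, (rStirling2 r (n + 1) (j + 1) : ℝ) * polyCauchy k j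
      = umbralEval a
          (∑ j ∈ Icc (r - 1) n, rStirling2 r (n + 1) (j + 1) • descPochhammer ℝ j) := by
        rw [map_sum]
        refine sum_congr rfl fun j _ => ?_
        rw [map_nsmul, nsmul_eq_mul, polyCauchy_eq_umbralEval]
    _ = _ := by
        rw [sum_Icc_rStirling2_smul_descPochhammer hr hn,
          umbralEval_X_add_one_pow_mul_descPochhammer a hr hn]
        simp only [div_eq_mul_inv, a]
end

section
/- For integers n ≥ r ≥ 1, an integer k, and 1 ≤ i ≤ n, the identity s(n,i) = ∑_{ℓ=1}^{r} s(r,ℓ) ∑_{j=1}^{n-r+2} (-1)^{ℓ+j-i} C(ℓ+j-2, i) · s_r(n+1, r+j-1) holds, where s denotes unsigned Stirling numbers of the first kind and s_r unsigned r-Stirling numbers of the first kind. -/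
open Finset

/-!
Both kinds of numbers are coefficients of rising factorials:
`∑ s(n,i) xⁱ = x(x+1)⋯(x+n-1)` and `∑ s_r(n+1,m) xᵐ = xʳ (x+r)(x+r+1)⋯(x+n)`.
Split `x(x+1)⋯(x+n-1)` as `x⋯(x+r-2)` times `(x+r-1)⋯(x+n-1)` and expand each factor in powers
of `x - 1`: the coefficients of the first are `s(r,ℓ)` and those of the second are
`s_r(n+1, r+j-1)`, because shifting `x ↦ x + 1` turns the factors into `x(x+1)⋯(x+r-1) / x` and
`xʳ (x+r)⋯(x+n) / xʳ`. Comparing coefficients of `xⁱ`, with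
`[xⁱ] (x-1)ᵐ = (-1)^(m-i) C(m,i)`, gives the identity.
-/

open Polynomial

section Coefficients

variable {S : Type*} [Semiring S]

lemma coeff_mul_X_add_natCast_zero (p : S[X]) (c : ℕ) :
    (p * (X + (c : S[X]))).coeff 0 = c * p.coeff 0 := by
  simp [mul_add, Nat.cast_comm]

lemma coeff_mul_X_add_natCast_succ (p : S[X]) (c k : ℕ) :
    (p * (X + (c : S[X]))).coeff (k + 1) = c * p.coeff (k + 1) + p.coeff k := by
  rw [mul_add, coeff_add, coeff_mul_X, coeff_mul_natCast, Nat.cast_comm, add_comm]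

lemma coeff_ascPochhammer (n k : ℕ) : (ascPochhammer S n).coeff k = stirling1 n k := by
  induction n generalizing k with
  | zero => cases k <;> simp [coeff_one, stirling1]
  | succ n ih =>
    rw [ascPochhammer_succ_right]
    cases k with
    | zero =>
      rw [coeff_mul_X_add_natCast_zero, ih]
      cases n <;> simp [stirling1]
    | succ k =>
      rw [coeff_mul_X_add_natCast_succ, ih, ih]
      simp [stirling1]

lemma coeff_taylor_one_ascPochhammer (m a : ℕ) :
    (taylor 1 (ascPochhammer S m)).coeff a = (stirling1 (m + 1) (a + 1) : S) := by
  rw [← coeff_ascPochhammer, ascPochhammer_succ_left, coeff_X_mul, taylor_apply, map_one]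

end Coefficients

section RStirling

lemma rStirling1_self (r m : ℕ) : rStirling1 r r m = if m = r then 1 else 0 := by
  cases r with
  | zero => rw [rStirling1.eq_1]; simp
  | succ r =>
    cases m with
    | zero => rw [rStirling1.eq_2, if_neg (by omega), if_pos rfl]
    | succ m => rw [rStirling1.eq_3, if_neg (by omega), if_pos rfl]

variable {r n : ℕ}

lemma rStirling1_succ_zero (h : r ≤ n) : rStirling1 r (n + 1) 0 = n * rStirling1 r n 0 := by
  rw [rStirling1.eq_2, if_neg (by omega), if_neg (by omega), add_zero]

lemma rStirling1_succ_succ (h : r ≤ n) (m : ℕ) :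
    rStirling1 r (n + 1) (m + 1) = n * rStirling1 r n (m + 1) + rStirling1 r n m := by
  rw [rStirling1.eq_3, if_neg (by omega), if_neg (by omega)]

end RStirling

section Generating

variable {S : Type*} [CommSemiring S]

lemma coeff_X_pow_mul_ascPochhammer_comp (r m k : ℕ) :
    (X ^ r * (ascPochhammer S m).comp (X + (r : S[X]))).coeff k =
      (rStirling1 r (r + m) k : S) := by
  induction m generalizing k with
  | zero => simp [coeff_X_pow, rStirling1_self]
  | succ m ih =>
    have hshift : (X + (m : S[X])).comp (X + (r : S[X])) = X + ((r + m : ℕ) : S[X]) := by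
      simp [add_assoc]
    rw [ascPochhammer_succ_right, mul_comp, hshift, ← mul_assoc, ← add_assoc]
    cases k with
    | zero =>
      rw [coeff_mul_X_add_natCast_zero, ih, rStirling1_succ_zero (by omega), Nat.cast_mul]
    | succ k =>
      rw [coeff_mul_X_add_natCast_succ, ih, ih, rStirling1_succ_succ (by omega)]
      norm_cast

lemma coeff_taylor_one_ascPochhammer_comp (r m b : ℕ) :
    (taylor 1 ((ascPochhammer S m).comp (X + (r : S[X])))).coeff b =
      (rStirling1 (r + 1) (r + 1 + m) (r + 1 + b) : S) := by
  rw [← coeff_X_pow_mul_ascPochhammer_comp, add_comm (r + 1) b, coeff_X_pow_mul, taylor_apply,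
    comp_assoc]
  simp [add_assoc, add_comm]

end Generating

lemma coeff_X_sub_one_pow {R : Type*} [Ring R] (m i : ℕ) :
    ((X - 1 : R[X]) ^ m).coeff i = (-1) ^ (m + i) * m.choose i := by
  rw [sub_eq_add_neg, ← C_1, ← C_neg, coeff_X_add_C_pow]
  rcases le_or_gt i m with him | him
  · rw [show m + i = (m - i) + 2 * i by omega, pow_add, pow_mul]
    simp
  · simp [Nat.choose_eq_zero_of_lt him]

lemma sum_Icc_taylor_one_eq {R : Type*} [CommRing R] (p : R[X]) {N : ℕ} (h : p.natDegree < N) :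
    ∑ ℓ ∈ Icc 1 N, C ((taylor 1 p).coeff (ℓ - 1)) * (X - 1) ^ (ℓ - 1) = p := by
  conv_rhs => rw [← sum_taylor_eq p 1]
  rw [sum_over_range' _ (by simp) N (by rwa [natDegree_taylor]), C_1, range_eq_Ico,
    ← Ico_add_one_right_eq_Icc, ← sum_Ico_add' _ 0 N 1]
  simp

theorem stmt10_general (n r i : ℕ) (hr : 1 ≤ r) (hn : r ≤ n) :
    (stirling1 n i : ℤ) =
      ∑ ℓ ∈ Finset.Icc 1 r, (stirling1 r ℓ : ℤ) *
        ∑ j ∈ Finset.Icc 1 (n - r + 2), (-1 : ℤ) ^ (ℓ + j + i) *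
          ((ℓ + j - 2).choose i : ℤ) * (rStirling1 r (n + 1) (r + j - 1) : ℤ) := by
  obtain ⟨a, rfl⟩ : ∃ a, r = a + 1 := ⟨r - 1, by omega⟩
  have hsplit : ascPochhammer ℤ n =
      ascPochhammer ℤ a * (ascPochhammer ℤ (n - a)).comp (X + (a : ℤ[X])) := by
    rw [ascPochhammer_mul, Nat.add_sub_cancel' (by omega)]
  have hdeg : ((ascPochhammer ℤ (n - a)).comp (X + (a : ℤ[X]))).natDegree < n - (a + 1) + 2 := by
    rw [natDegree_comp, ← C_eq_natCast, natDegree_X_add_C]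
    simp only [ascPochhammer_natDegree, mul_one]
    omega
  rw [← coeff_ascPochhammer (S := ℤ) n i, hsplit,
    ← sum_Icc_taylor_one_eq (ascPochhammer ℤ a) (N := a + 1) (by simp),
    ← sum_Icc_taylor_one_eq _ hdeg, sum_mul_sum, finsetSum_coeff]
  refine sum_congr rfl fun ℓ hℓ => ?_
  rw [finsetSum_coeff, mul_sum]
  refine sum_congr rfl fun j hj => ?_
  rw [mem_Icc] at hℓ hj
  rw [coeff_taylor_one_ascPochhammer, coeff_taylor_one_ascPochhammer_comp, Nat.sub_add_cancel hℓ.1, show a + 1 + (n - a) = n + 1 by omega,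
    show a + 1 + (j - 1) = a + 1 + j - 1 by omega, mul_mul_mul_comm, ← C_mul, ← pow_add,
    coeff_C_mul, coeff_X_sub_one_pow, show ℓ - 1 + (j - 1) = ℓ + j - 2 by omega,
    show ℓ + j + i = ℓ + j - 2 + i + 2 by omega, pow_add]
  ring

theorem stmt10 (n r i : ℕ) (k : ℤ) (hr : 1 ≤ r) (hn : r ≤ n) (hi : 1 ≤ i)
    (hi' : i ≤ n) :
    (stirling1 n i : ℤ) =
      ∑ ℓ ∈ Finset.Icc 1 r, (stirling1 r ℓ : ℤ) *
        ∑ j ∈ Finset.Icc 1 (n - r + 2), (-1 : ℤ) ^ (ℓ + j + i) *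
          ((ℓ + j - 2).choose i : ℤ) * (rStirling1 r (n + 1) (r + j - 1) : ℤ) :=
  stmt10_general n r i hr hn
end

section
/- For n ≥ 3, the poly-Cauchy numbers with index -1 satisfy c_n^{(-1)} + (n-2) c_{n-1}^{(-1)} = 0, and for n ≥ 4 those with index -2 satisfy c_n^{(-2)} + (2n-5) c_{n-1}^{(-2)} + (n-3)^2 c_{n-2}^{(-2)} = 0. -/
open Finset

/-! The sums `S_n(w) = ∑ₗ (-1)^(n-ℓ) [n, ℓ] w(ℓ)` satisfy
`S_{n+1}(w) = -n S_n(w) + S_n(w(· + 1))` by the Stirling recurrence, so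
`S_{n+1}(1) = (1 - n) S_n(1)` and `S_n` kills constants for `n ≥ 2`.
As `c_n^{(-k)} = S_n((ℓ + 1)^k)`, expanding `(ℓ + 2)^k` gives, for `n ≥ 2`,
`c_{n+1}^{(-1)} = (1 - n) c_n^{(-1)}` and `c_{n+1}^{(-2)} = (1 - n) c_n^{(-2)} + 2 c_n^{(-1)}`;
eliminating `c^{(-1)}` from the second gives the three-term recurrence. -/

section SignedStirlingSum

variable {R : Type*} [CommRing R]

def signedStirlingSum (n : ℕ) (w : ℕ → R) : R :=
  ∑ ℓ ∈ range (n + 1), (-1) ^ (n - ℓ) * (Nat.stirlingFirst n ℓ : R) * w ℓ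

theorem signedStirlingSum_succ (n : ℕ) (w : ℕ → R) :
    signedStirlingSum (n + 1) w =
      -n * signedStirlingSum n w + signedStirlingSum n (fun ℓ => w (ℓ + 1)) := by
  have hsplit : ∀ ℓ ∈ range (n + 1),
      (-1) ^ (n + 1 - (ℓ + 1)) * (Nat.stirlingFirst (n + 1) (ℓ + 1) : R) * w (ℓ + 1) =
        n * ((-1) ^ (n - ℓ) * (Nat.stirlingFirst n (ℓ + 1) : R) * w (ℓ + 1)) +
          (-1) ^ (n - ℓ) * (Nat.stirlingFirst n ℓ : R) * w (ℓ + 1) := by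
    intro ℓ _
    rw [Nat.add_sub_add_right, Nat.stirlingFirst_succ_succ]
    push_cast
    ring
  -- Reindexing `S_n(w)` from `ℓ = 1` drops the term `[n, 0] w(0)`, harmless under the factor `n`.
  have hshift : (n : R) * ∑ ℓ ∈ range (n + 1),
      (-1) ^ (n - ℓ) * (Nat.stirlingFirst n (ℓ + 1) : R) * w (ℓ + 1) =
        -n * signedStirlingSum n w := by
    cases n with
    | zero => simp
    | succ m =>
      rw [signedStirlingSum, sum_range_succ, sum_range_succ' _ (m + 1),
        Nat.stirlingFirst_eq_zero_of_lt (by omega)]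
      simp only [Nat.stirlingFirst_succ_zero, Nat.add_sub_add_right, Nat.cast_zero, mul_zero,
        zero_mul, add_zero, neg_mul, ← mul_neg, ← sum_neg_distrib]
      refine congrArg _ (sum_congr rfl fun ℓ hℓ => ?_)
      rw [Nat.sub_add_comm (by simpa [Nat.lt_succ_iff] using hℓ), pow_succ]
      ring
  rw [signedStirlingSum, sum_range_succ', sum_congr rfl hsplit, sum_add_distrib, ← mul_sum,
    hshift]
  simp [signedStirlingSum]

theorem signedStirlingSum_const (n : ℕ) (c : R) :
    signedStirlingSum (n + 2) (fun _ => c) = 0 := by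
  induction n with
  | zero => simp [signedStirlingSum_succ]
  | succ n ih => rw [signedStirlingSum_succ, ih]; simp

end SignedStirlingSum

theorem stirling1_eq_stirlingFirst : stirling1 = Nat.stirlingFirst := by
  funext n k
  induction n generalizing k with
  | zero => cases k <;> rfl
  | succ n ih => cases k <;> simp [stirling1, Nat.stirlingFirst_succ_succ, ih]

theorem polyCauchy_neg_natCast (k n : ℕ) :
    polyCauchy (-k) n = signedStirlingSum n (fun ℓ => ((ℓ : ℝ) + 1) ^ k) := by
  simp only [polyCauchy, signedStirlingSum, stirling1_eq_stirlingFirst, zpow_neg, zpow_natCast,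
    div_inv_eq_mul]

theorem polyCauchy_neg_one (n : ℕ) :
    polyCauchy (-1) n = signedStirlingSum n (fun ℓ => (ℓ : ℝ) + 1) := by
  simpa using polyCauchy_neg_natCast 1 n

theorem polyCauchy_neg_two (n : ℕ) :
    polyCauchy (-2) n = signedStirlingSum n (fun ℓ => ((ℓ : ℝ) + 1) ^ 2) := by
  exact_mod_cast polyCauchy_neg_natCast 2 n

theorem polyCauchy_neg_one_succ {n : ℕ} (hn : 2 ≤ n) :
    polyCauchy (-1) (n + 1) = (1 - n) * polyCauchy (-1) n := by
  obtain ⟨m, rfl⟩ := Nat.exists_eq_add_of_le' hn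
  have hexpand : signedStirlingSum (m + 2) (fun ℓ => ((ℓ + 1 : ℕ) : ℝ) + 1) =
      signedStirlingSum (m + 2) (fun ℓ => (ℓ : ℝ) + 1) +
        signedStirlingSum (m + 2) (fun _ => (1 : ℝ)) := by
    simp only [signedStirlingSum, ← sum_add_distrib]
    exact sum_congr rfl fun _ _ => by push_cast; ring
  rw [polyCauchy_neg_one, polyCauchy_neg_one, signedStirlingSum_succ, hexpand,
    signedStirlingSum_const]
  ring

theorem polyCauchy_neg_two_succ {n : ℕ} (hn : 2 ≤ n) :
    polyCauchy (-2) (n + 1) = (1 - n) * polyCauchy (-2) n + 2 * polyCauchy (-1) n := by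
  obtain ⟨m, rfl⟩ := Nat.exists_eq_add_of_le' hn
  have hexpand : signedStirlingSum (m + 2) (fun ℓ => (((ℓ + 1 : ℕ) : ℝ) + 1) ^ 2) =
      signedStirlingSum (m + 2) (fun ℓ => ((ℓ : ℝ) + 1) ^ 2) +
        2 * signedStirlingSum (m + 2) (fun ℓ => (ℓ : ℝ) + 1) +
          signedStirlingSum (m + 2) (fun _ => (1 : ℝ)) := by
    simp only [signedStirlingSum, mul_sum, ← sum_add_distrib]
    exact sum_congr rfl fun _ _ => by push_cast; ring
  rw [polyCauchy_neg_two, polyCauchy_neg_two, polyCauchy_neg_one, signedStirlingSum_succ, hexpand,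
    signedStirlingSum_const]
  ring

theorem stmt18 (n : ℕ) :
    (3 ≤ n → polyCauchy (-1) n + ((n : ℝ) - 2) * polyCauchy (-1) (n - 1) = 0) ∧
    (4 ≤ n → polyCauchy (-2) n + (2 * (n : ℝ) - 5) * polyCauchy (-2) (n - 1) +
      ((n : ℝ) - 3) ^ 2 * polyCauchy (-2) (n - 2) = 0) := by
  refine ⟨fun hn => ?_, fun hn => ?_⟩
  · obtain ⟨m, rfl⟩ := Nat.exists_eq_add_of_le' hn
    rw [show m + 3 - 1 = m + 2 by omega, polyCauchy_neg_one_succ (n := m + 2) (by omega)]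
    push_cast
    ring
  · obtain ⟨m, rfl⟩ := Nat.exists_eq_add_of_le' hn
    rw [show m + 4 - 1 = m + 3 by omega, show m + 4 - 2 = m + 2 by omega]
    have hneg2_4 := polyCauchy_neg_two_succ (n := m + 3) (by omega)
    have hneg2_3 := polyCauchy_neg_two_succ (n := m + 2) (by omega)
    have hneg1_3 := polyCauchy_neg_one_succ (n := m + 2) (by omega)
    simp only [Nat.add_assoc, Nat.reduceAdd] at hneg2_4 hneg2_3 hneg1_3
    push_cast at hneg2_4 hneg2_3 hneg1_3 ⊢
    linear_combination hneg2_4 + (m + 1) * hneg2_3 + 2 * hneg1_3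
end
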